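/- arXiv:2109.06272 — 5 statements merged into one kernel-verified Lean document; each statement's English description precedes it below -/
import Mathlib

section
/- Let A, B, P, Q ∈ ℂ satisfy the conformality relation A·conj(B) = P·conj(Q) and the orientation condition |A| ≥ |B|, and suppose that for every α ∈ ℂ with |α| = 1 one has |conj(α)·P + α·Q| < |conj(α)·A + α·B|. Then |A| > |P| ≥ |B| and |A| > |Q| ≥ |B|; in particular A ≠ 0. -/
/-!
For a unit `α`, `‖conj α * X + α * Y‖ = ‖X + α ^ 2 * Y‖`, and `α ^ 2` runs over the whole unit
circle, so this norm attains both `‖X‖ + ‖Y‖` and `|‖X‖ - ‖Y‖|`. Testing the space-like condition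
at the maximiser for `(P, Q)` and at the minimiser for `(A, B)` gives
`‖P‖ + ‖Q‖ < ‖A‖ + ‖B‖` and `|‖P‖ - ‖Q‖| < ‖A‖ - ‖B‖`, hence `‖P‖, ‖Q‖ < ‖A‖`. Conformality gives
`‖A‖ ‖B‖ = ‖P‖ ‖Q‖`, and then `‖Q‖ < ‖A‖` forces `‖B‖ ≤ ‖P‖` (and symmetrically).
-/

open Complex ComplexConjugate

namespace Complex

theorem exists_sq_eq_of_norm_eq_one {u : ℂ} (hu : ‖u‖ = 1) : ∃ α : ℂ, ‖α‖ = 1 ∧ α ^ 2 = u := by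
  obtain ⟨α, hα⟩ := IsAlgClosed.exists_pow_nat_eq u two_pos
  refine ⟨α, ?_, hα⟩
  have : ‖α‖ ^ 2 = 1 := by rw [← norm_pow, hα, hu]
  exact (pow_eq_one_iff_of_nonneg (norm_nonneg α) two_ne_zero).mp this

variable {α : ℂ}

theorem norm_conj_mul_add_mul_le (hα : ‖α‖ = 1) (X Y : ℂ) :
    ‖conj α * X + α * Y‖ ≤ ‖X‖ + ‖Y‖ := by
  simpa [hα] using norm_add_le (conj α * X) (α * Y)

theorem abs_norm_sub_norm_le_norm_conj_mul_add_mul (hα : ‖α‖ = 1) (X Y : ℂ) :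
    |‖X‖ - ‖Y‖| ≤ ‖conj α * X + α * Y‖ := by
  simpa [hα] using abs_norm_sub_norm_le (conj α * X) (-(α * Y))

theorem norm_conj_mul_add_mul (hα : ‖α‖ = 1) (X Y : ℂ) :
    ‖conj α * X + α * Y‖ = ‖X + α ^ 2 * Y‖ := by
  have hunit : conj α * α = 1 := by
    rw [← normSq_eq_conj_mul_self, normSq_eq_norm_sq, hα, one_pow, ofReal_one]
  calc ‖conj α * X + α * Y‖ = ‖conj α * (X + α ^ 2 * Y)‖ := by
        congr 1; linear_combination (-(α * Y)) * hunit
    _ = ‖X + α ^ 2 * Y‖ := by rw [norm_mul, norm_conj, hα, one_mul]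

theorem norm_add_ofReal_mul_exp_arg_sub_mul (X Y : ℂ) (s : ℝ) :
    ‖X + s * exp ((arg X - arg Y) * I) * Y‖ = |‖X‖ + s * ‖Y‖| := by
  have hexp : exp ((arg X - arg Y) * I) * exp (arg Y * I) = exp (arg X * I) := by
    rw [← exp_add]; ring_nf
  have h : X + s * exp ((arg X - arg Y) * I) * Y = (‖X‖ + s * ‖Y‖ : ℝ) * exp (arg X * I) := by
    push_cast
    linear_combination (-1 : ℂ) * norm_mul_exp_arg_mul_I X
      - s * exp ((arg X - arg Y) * I) * norm_mul_exp_arg_mul_I Y + s * ‖Y‖ * hexp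
  rw [h, norm_mul, norm_exp_ofReal_mul_I, mul_one, norm_real, Real.norm_eq_abs]

theorem exists_norm_conj_mul_add_mul_eq (X Y : ℂ) {s : ℝ} (hs : |s| = 1) :
    ∃ α : ℂ, ‖α‖ = 1 ∧ ‖conj α * X + α * Y‖ = |‖X‖ + s * ‖Y‖| := by
  have hu : ‖(s * exp ((arg X - arg Y) * I) : ℂ)‖ = 1 := by
    rw [norm_mul, ← ofReal_sub, norm_exp_ofReal_mul_I, norm_real, Real.norm_eq_abs, hs, mul_one]
  obtain ⟨α, hα, hsq⟩ := exists_sq_eq_of_norm_eq_one hu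
  exact ⟨α, hα, by rw [norm_conj_mul_add_mul hα, hsq, norm_add_ofReal_mul_exp_arg_sub_mul]⟩

end Complex

theorem le_of_mul_eq_mul_of_lt {R : Type*} [CommSemiring R] [LinearOrder R] [IsStrictOrderedRing R]
    {a b p q : R} (h : a * b = p * q) (hqa : q < a)
    (hp : 0 ≤ p) (hq : 0 ≤ q) : b ≤ p :=
  le_of_not_gt fun hpb => (mul_lt_mul'' hpb hqa hp hq).ne' (by rw [← h, mul_comm])

/-- If `A conj(B) = P conj(Q)`, `|A| ≥ |B|`, and for every unimodular `α` one has
`|conj(α) P + α Q| < |conj(α) A + α B|`, then `|A| > |P| ≥ |B|` and `|A| > |Q| ≥ |B|`;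
in particular `A ≠ 0`. -/
theorem spacelike_gradient_inequalities (A B P Q : ℂ)
    (hconf : A * (starRingEnd ℂ) B = P * (starRingEnd ℂ) Q)
    (horient : ‖B‖ ≤ ‖A‖)
    (hspace : ∀ α : ℂ, ‖α‖ = 1 →
      ‖(starRingEnd ℂ) α * P + α * Q‖ <
        ‖(starRingEnd ℂ) α * A + α * B‖) :
    ‖P‖ < ‖A‖ ∧ ‖B‖ ≤ ‖P‖ ∧
      ‖Q‖ < ‖A‖ ∧ ‖B‖ ≤ ‖Q‖ ∧ A ≠ 0 := by
  have hnorm : ‖A‖ * ‖B‖ = ‖P‖ * ‖Q‖ := by simpa using congrArg norm hconf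
  obtain ⟨α, hα, hmax⟩ := exists_norm_conj_mul_add_mul_eq P Q (s := 1) abs_one
  have hsum : ‖P‖ + ‖Q‖ < ‖A‖ + ‖B‖ := by
    have := (hspace α hα).trans_le (norm_conj_mul_add_mul_le hα A B)
    rwa [hmax, one_mul, abs_of_nonneg (by positivity)] at this
  obtain ⟨β, hβ, hmin⟩ := exists_norm_conj_mul_add_mul_eq A B (s := -1) (by simp)
  have hdiff : |‖P‖ - ‖Q‖| < ‖A‖ - ‖B‖ := by
    have := (abs_norm_sub_norm_le_norm_conj_mul_add_mul hβ P Q).trans_lt (hspace β hβ)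
    rwa [hmin, neg_one_mul, ← sub_eq_add_neg, abs_of_nonneg (sub_nonneg.mpr horient)] at this
  obtain ⟨hPQ, hQP⟩ := abs_sub_lt_iff.mp hdiff
  have hPA : ‖P‖ < ‖A‖ := by linarith
  have hQA : ‖Q‖ < ‖A‖ := by linarith
  refine ⟨hPA, le_of_mul_eq_mul_of_lt hnorm hQA (norm_nonneg P) (norm_nonneg Q), hQA,
    le_of_mul_eq_mul_of_lt (hnorm.trans (mul_comm _ _)) hPA (norm_nonneg Q) (norm_nonneg P),
    norm_pos_iff.mp ((norm_nonneg P).trans_lt hPA)⟩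
end

section
/- Let V ⊆ ℂ be open, let F : V → ℂ be twice continuously differentiable, and let ν : V → ℂ be anti-holomorphic (∂ν ≡ 0 on V) with |ν(ζ)| < 1 for all ζ ∈ V. If F satisfies the conjugate Beltrami equation ∂̄F(ζ) = ν(ζ)·conj(∂F(ζ)) for all ζ ∈ V, then F is harmonic on V, i.e. ∂∂̄F ≡ 0 on V. -/
/-!
Apply `∂` to the equation `∂̄F = ν · conj(∂F)`. Since `∂ν = 0` and `∂ conj(G) = conj(∂̄G)`, this
gives `∂∂̄F = ν · conj(∂̄∂F)`, and `∂̄∂F = ∂∂̄F` by symmetry of the second derivative. Hence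
`|∂∂̄F| ≤ |ν| |∂∂̄F|`, which forces `∂∂̄F = 0` because `|ν| < 1`.
-/

open Complex

/-- The Wirtinger derivative `∂F = ½(∂ₓF - i ∂_yF)`. -/
noncomputable def wirtingerD (F : ℂ → ℂ) (ζ : ℂ) : ℂ :=
  (1 / 2) * (fderiv ℝ F ζ 1 - Complex.I * fderiv ℝ F ζ Complex.I)

/-- The conjugate Wirtinger derivative `∂̄F = ½(∂ₓF + i ∂_yF)`. -/
noncomputable def wirtingerDBar (F : ℂ → ℂ) (ζ : ℂ) : ℂ :=
  (1 / 2) * (fderiv ℝ F ζ 1 + Complex.I * fderiv ℝ F ζ Complex.I)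

open ComplexConjugate

section Wirtinger

variable {F f g : ℂ → ℂ} {ζ : ℂ}

lemma hasFDerivAt_fderiv_apply (hF : DifferentiableAt ℝ (fderiv ℝ F) ζ) (v : ℂ) :
    HasFDerivAt (fun w => fderiv ℝ F w v) ((fderiv ℝ (fderiv ℝ F) ζ).flip v) ζ := by
  simpa using hF.hasFDerivAt.clm_apply (hasFDerivAt_const v ζ)

lemma hasFDerivAt_wirtingerD (hF : DifferentiableAt ℝ (fderiv ℝ F) ζ) :
    HasFDerivAt (wirtingerD F) ((1 / 2 : ℂ) •
      ((fderiv ℝ (fderiv ℝ F) ζ).flip 1 - I • (fderiv ℝ (fderiv ℝ F) ζ).flip I)) ζ :=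
  ((hasFDerivAt_fderiv_apply hF 1).sub
    ((hasFDerivAt_fderiv_apply hF I).const_mul I)).const_mul (1 / 2 : ℂ)

lemma hasFDerivAt_wirtingerDBar (hF : DifferentiableAt ℝ (fderiv ℝ F) ζ) :
    HasFDerivAt (wirtingerDBar F) ((1 / 2 : ℂ) •
      ((fderiv ℝ (fderiv ℝ F) ζ).flip 1 + I • (fderiv ℝ (fderiv ℝ F) ζ).flip I)) ζ :=
  ((hasFDerivAt_fderiv_apply hF 1).add
    ((hasFDerivAt_fderiv_apply hF I).const_mul I)).const_mul (1 / 2 : ℂ)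

lemma wirtingerD_wirtingerDBar (hF : DifferentiableAt ℝ (fderiv ℝ F) ζ) :
    letI D := fderiv ℝ (fderiv ℝ F) ζ
    wirtingerD (wirtingerDBar F) ζ = (1 / 4) * (D 1 1 + D I I + I * (D 1 I - D I 1)) := by
  simp only [wirtingerD, (hasFDerivAt_wirtingerDBar hF).fderiv, smul_add, add_apply, smul_apply,
    ContinuousLinearMap.flip_apply, smul_eq_mul]
  linear_combination (-1 / 4 * fderiv ℝ (fderiv ℝ F) ζ I I) * I_sq

lemma wirtingerDBar_wirtingerD (hF : DifferentiableAt ℝ (fderiv ℝ F) ζ) :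
    letI D := fderiv ℝ (fderiv ℝ F) ζ
    wirtingerDBar (wirtingerD F) ζ = (1 / 4) * (D 1 1 + D I I - I * (D 1 I - D I 1)) := by
  simp only [wirtingerDBar, (hasFDerivAt_wirtingerD hF).fderiv, smul_sub, sub_apply, smul_apply,
    ContinuousLinearMap.flip_apply, smul_eq_mul]
  linear_combination (-1 / 4 * fderiv ℝ (fderiv ℝ F) ζ I I) * I_sq

theorem wirtingerD_wirtingerDBar_comm (hF : ContDiffAt ℝ 2 F ζ) :
    wirtingerD (wirtingerDBar F) ζ = wirtingerDBar (wirtingerD F) ζ := by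
  have hD : DifferentiableAt ℝ (fderiv ℝ F) ζ :=
    (hF.fderiv_right le_rfl).differentiableAt one_ne_zero
  rw [wirtingerD_wirtingerDBar hD, wirtingerDBar_wirtingerD hD,
    hF.isSymmSndFDerivAt (by simp) 1 I, sub_self, mul_zero, add_zero, sub_zero]

lemma wirtingerD_mul (hf : DifferentiableAt ℝ f ζ) (hg : DifferentiableAt ℝ g ζ) :
    wirtingerD (fun w => f w * g w) ζ = wirtingerD f ζ * g ζ + f ζ * wirtingerD g ζ := by
  simp only [wirtingerD, fderiv_fun_mul hf hg, add_apply, smul_apply, smul_eq_mul]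
  ring

lemma wirtingerD_conj (f : ℂ → ℂ) (ζ : ℂ) :
    wirtingerD (fun w => conj (f w)) ζ = conj (wirtingerDBar f ζ) := by
  have h : fderiv ℝ (fun w => conj (f w)) ζ = conjCLE.toContinuousLinearMap.comp (fderiv ℝ f ζ) :=
    conjCLE.comp_fderiv
  simp only [wirtingerD, wirtingerDBar, h, ContinuousLinearMap.comp_apply,
    ContinuousLinearEquiv.coe_coe, conjCLE_apply, map_mul, map_add, map_div₀, map_one, map_ofNat,
    conj_I]
  ring

lemma Filter.EventuallyEq.wirtingerD_eq (h : f =ᶠ[nhds ζ] g) :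
    wirtingerD f ζ = wirtingerD g ζ := by
  simp only [wirtingerD, h.fderiv_eq]

end Wirtinger

lemma Complex.eq_zero_of_eq_mul_conj {z c : ℂ} (hc : ‖c‖ < 1) (h : z = c * conj z) : z = 0 := by
  have hz : ‖z‖ = ‖c‖ * ‖z‖ := by
    conv_lhs => rw [h]
    rw [norm_mul, norm_conj]
  exact norm_eq_zero.mp (by nlinarith [norm_nonneg z])

/-- A `C²` solution of the conjugate Beltrami equation `∂̄F = ν conj(∂F)` with
anti-holomorphic dilatation `ν` of modulus `< 1` is harmonic: `∂∂̄F ≡ 0`. -/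
theorem conjugate_beltrami_harmonic (V : Set ℂ) (hV : IsOpen V) (F ν : ℂ → ℂ)
    (hF : ContDiffOn ℝ 2 F V)
    (hν : DifferentiableOn ℝ ν V)
    (hanti : ∀ ζ ∈ V, wirtingerD ν ζ = 0)
    (hmod : ∀ ζ ∈ V, ‖ν ζ‖ < 1)
    (hbel : ∀ ζ ∈ V, wirtingerDBar F ζ = ν ζ * (starRingEnd ℂ) (wirtingerD F ζ)) :
    ∀ ζ ∈ V, wirtingerD (fun w => wirtingerDBar F w) ζ = 0 := by
  intro ζ hζ
  have hV_nhds : V ∈ nhds ζ := hV.mem_nhds hζ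
  have hF₂ : ContDiffAt ℝ 2 F ζ := hF.contDiffAt hV_nhds
  have hDF : DifferentiableAt ℝ (wirtingerD F) ζ :=
    (hasFDerivAt_wirtingerD
      ((hF₂.fderiv_right le_rfl).differentiableAt one_ne_zero)).differentiableAt
  have hconjDF : DifferentiableAt ℝ (fun w => conj (wirtingerD F w)) ζ :=
    conjCLE.differentiableAt.comp ζ hDF
  refine eq_zero_of_eq_mul_conj (hmod ζ hζ) ?_
  calc wirtingerD (wirtingerDBar F) ζ
      = wirtingerD (fun w => ν w * conj (wirtingerD F w)) ζ :=
        Filter.EventuallyEq.wirtingerD_eq (Filter.mem_of_superset hV_nhds hbel)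
    _ = ν ζ * conj (wirtingerDBar (wirtingerD F) ζ) := by
        rw [wirtingerD_mul ((hν ζ hζ).differentiableAt hV_nhds) hconjDF, hanti ζ hζ,
          wirtingerD_conj, zero_mul, zero_add]
    _ = ν ζ * conj (wirtingerD (wirtingerDBar F) ζ) := by
        rw [wirtingerD_wirtingerDBar_comm hF₂]
end

section
/- Let V ⊆ ℂ be open and let z, θ : V → ℂ be real-differentiable functions satisfying, at every point of V: the conformality relation ∂z·conj(∂̄z) = ∂θ·conj(∂̄θ), the orientation condition |∂z| ≥ |∂̄z|, and the space-like condition |conj(α)·∂θ + α·∂̄θ| < |conj(α)·∂z + α·∂̄z| for every α ∈ ℂ with |α| = 1. Let f : V → ℂ and let F : V → ℂ be real-differentiable with ∂F = f·∂z + conj(f)·∂θ and ∂̄F = f·∂̄z + conj(f)·∂̄θ on V (i.e., F is a primitive of the 1-form f dz + conj(f) dθ). Then ∂z is nowhere zero on V, and F satisfies the conjugate Beltrami equation ∂̄F(ζ) = ν(ζ)·conj(∂F(ζ)) for all ζ ∈ V, where ν := ∂̄θ / conj(∂z) satisfies |ν(ζ)| < 1 for all ζ ∈ V. -/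
open Complex

/-!
At a point write `a = ∂z`, `b = ∂̄z`, `c = ∂θ`, `d = ∂̄θ`. Choosing the unimodular `α` that
aligns `conj α · c` with `α · d`, the space-like condition gives `|c| + |d| < |a| + |b|`, while
conformality gives `|a| |b| = |c| |d|`; with `|b| ≤ |a|` this forces `|d| < |a|`, so `a ≠ 0` and
`|ν| < 1`. The Beltrami equation is then the identity
`f b + conj f · d = (d / conj a) · conj (f a + conj f · c)`, i.e. conformality divided by `conj a`.
-/

open ComplexConjugate

lemma exists_norm_conj_mul_add_mul_eq_add (c d : ℂ) :
    ∃ α : ℂ, ‖α‖ = 1 ∧ ‖conj α * c + α * d‖ = ‖c‖ + ‖d‖ := by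
  -- rotating `c` by `conj α` and `d` by `α` brings both to the argument `(arg c + arg d) / 2`
  set φ : ℝ := (arg c - arg d) / 2 with hφ
  set ψ : ℝ := (arg c + arg d) / 2 with hψ
  refine ⟨exp (φ * I), norm_exp_ofReal_mul_I φ, ?_⟩
  have hsum :
      conj (exp (φ * I)) * c + exp (φ * I) * d = (‖c‖ + ‖d‖ : ℝ) * exp (ψ * I) := by
    have e1 : exp (-(φ * I)) * exp (arg c * I) = exp (ψ * I) := by
      rw [← exp_add, hφ, hψ]; push_cast; ring_nf
    have e2 : exp (φ * I) * exp (arg d * I) = exp (ψ * I) := by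
      rw [← exp_add, hφ, hψ]; push_cast; ring_nf
    rw [← exp_conj, map_mul, conj_ofReal, conj_I, mul_neg, ofReal_add]
    linear_combination -exp (-(φ * I)) * norm_mul_exp_arg_mul_I c
      - exp (φ * I) * norm_mul_exp_arg_mul_I d + (‖c‖ : ℂ) * e1 + (‖d‖ : ℂ) * e2
  rw [hsum, norm_mul, norm_exp_ofReal_mul_I, mul_one, norm_real,
    Real.norm_of_nonneg (by positivity)]

lemma lt_of_mul_eq_mul_of_add_lt_add {p q r s : ℝ} (hr : 0 ≤ r) (hqp : q ≤ p)
    (hmul : p * q = r * s) (hadd : r + s < p + q) : s < p := by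
  by_contra! hps
  -- `(p - s) (q - s) = s (r + s - p - q)`
  nlinarith [mul_nonneg (sub_nonneg.2 hps) (sub_nonneg.2 (hqp.trans hps))]

lemma norm_lt_norm_of_conformal_spacelike {a b c d : ℂ} (hconf : a * conj b = c * conj d)
    (horient : ‖b‖ ≤ ‖a‖)
    (hspace : ∀ α : ℂ, ‖α‖ = 1 → ‖conj α * c + α * d‖ < ‖conj α * a + α * b‖) :
    ‖d‖ < ‖a‖ := by
  obtain ⟨α, hα, hαcd⟩ := exists_norm_conj_mul_add_mul_eq_add c d
  have hadd : ‖c‖ + ‖d‖ < ‖a‖ + ‖b‖ :=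
    calc ‖c‖ + ‖d‖ = ‖conj α * c + α * d‖ := hαcd.symm
      _ < ‖conj α * a + α * b‖ := hspace α hα
      _ ≤ ‖conj α * a‖ + ‖α * b‖ := norm_add_le _ _
      _ = ‖a‖ + ‖b‖ := by simp only [norm_mul, norm_conj, hα, one_mul]
  have hmul : ‖a‖ * ‖b‖ = ‖c‖ * ‖d‖ := by
    simpa only [norm_mul, norm_conj] using congrArg norm hconf
  exact lt_of_mul_eq_mul_of_add_lt_add (norm_nonneg _) horient hmul hadd

lemma mul_add_conj_mul_eq_div_conj_mul_conj {a b c d : ℂ} (ha : a ≠ 0)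
    (hconf : a * conj b = c * conj d) (f : ℂ) :
    f * b + conj f * d = d / conj a * conj (f * a + conj f * c) := by
  have hconf' : conj a * b = conj c * d := by simpa using congrArg conj hconf
  have hca : conj a ≠ 0 := (map_ne_zero _).2 ha
  rw [map_add, map_mul, map_mul, conj_conj]
  field_simp
  linear_combination f * hconf'

theorem primitive_satisfies_conjugate_beltrami_general (V : Set ℂ)
    (z θ f F : ℂ → ℂ)
    (hconf : ∀ ζ ∈ V, wirtingerD z ζ * (starRingEnd ℂ) (wirtingerDBar z ζ)
      = wirtingerD θ ζ * (starRingEnd ℂ) (wirtingerDBar θ ζ))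
    (horient : ∀ ζ ∈ V, ‖wirtingerDBar z ζ‖ ≤ ‖wirtingerD z ζ‖)
    (hspace : ∀ ζ ∈ V, ∀ α : ℂ, ‖α‖ = 1 →
      ‖(starRingEnd ℂ) α * wirtingerD θ ζ + α * wirtingerDBar θ ζ‖ <
        ‖(starRingEnd ℂ) α * wirtingerD z ζ + α * wirtingerDBar z ζ‖)
    (hdF : ∀ ζ ∈ V, wirtingerD F ζ
      = f ζ * wirtingerD z ζ + (starRingEnd ℂ) (f ζ) * wirtingerD θ ζ)
    (hdbarF : ∀ ζ ∈ V, wirtingerDBar F ζ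
      = f ζ * wirtingerDBar z ζ + (starRingEnd ℂ) (f ζ) * wirtingerDBar θ ζ) :
    ∀ ζ ∈ V, wirtingerD z ζ ≠ 0 ∧
      ‖wirtingerDBar θ ζ / (starRingEnd ℂ) (wirtingerD z ζ)‖ < 1 ∧
      wirtingerDBar F ζ = (wirtingerDBar θ ζ / (starRingEnd ℂ) (wirtingerD z ζ))
        * (starRingEnd ℂ) (wirtingerD F ζ) := by
  intro ζ hζ
  have hlt : ‖wirtingerDBar θ ζ‖ < ‖wirtingerD z ζ‖ :=
    norm_lt_norm_of_conformal_spacelike (hconf ζ hζ) (horient ζ hζ) (hspace ζ hζ)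
  have hpos : 0 < ‖wirtingerD z ζ‖ := (norm_nonneg _).trans_lt hlt
  refine ⟨norm_pos_iff.mp hpos, ?_, ?_⟩
  · rw [norm_div, norm_conj]
    exact (div_lt_one hpos).2 hlt
  · rw [hdbarF ζ hζ, hdF ζ hζ]
    exact mul_add_conj_mul_eq_div_conj_mul_conj (norm_pos_iff.mp hpos) (hconf ζ hζ) (f ζ)

/-- For a conformal orientation-preserving space-like parametrization `(z, θ)`, any
primitive `F` of the 1-form `f dz + conj(f) dθ` satisfies the conjugate Beltrami
equation `∂̄F = ν conj(∂F)` with `ν = ∂̄θ / conj(∂z)` of modulus `< 1`;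
moreover `∂z` is nowhere zero. -/
theorem primitive_satisfies_conjugate_beltrami (V : Set ℂ) (hV : IsOpen V)
    (z θ f F : ℂ → ℂ)
    (hz : DifferentiableOn ℝ z V) (hθ : DifferentiableOn ℝ θ V)
    (hF : DifferentiableOn ℝ F V)
    (hconf : ∀ ζ ∈ V, wirtingerD z ζ * (starRingEnd ℂ) (wirtingerDBar z ζ)
      = wirtingerD θ ζ * (starRingEnd ℂ) (wirtingerDBar θ ζ))
    (horient : ∀ ζ ∈ V, ‖wirtingerDBar z ζ‖ ≤ ‖wirtingerD z ζ‖)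
    (hspace : ∀ ζ ∈ V, ∀ α : ℂ, ‖α‖ = 1 →
      ‖(starRingEnd ℂ) α * wirtingerD θ ζ + α * wirtingerDBar θ ζ‖ <
        ‖(starRingEnd ℂ) α * wirtingerD z ζ + α * wirtingerDBar z ζ‖)
    (hdF : ∀ ζ ∈ V, wirtingerD F ζ
      = f ζ * wirtingerD z ζ + (starRingEnd ℂ) (f ζ) * wirtingerD θ ζ)
    (hdbarF : ∀ ζ ∈ V, wirtingerDBar F ζ
      = f ζ * wirtingerDBar z ζ + (starRingEnd ℂ) (f ζ) * wirtingerDBar θ ζ) :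
    ∀ ζ ∈ V, wirtingerD z ζ ≠ 0 ∧
      ‖wirtingerDBar θ ζ / (starRingEnd ℂ) (wirtingerD z ζ)‖ < 1 ∧
      wirtingerDBar F ζ = (wirtingerDBar θ ζ / (starRingEnd ℂ) (wirtingerD z ζ))
        * (starRingEnd ℂ) (wirtingerD F ζ) :=
  primitive_satisfies_conjugate_beltrami_general V z θ f F hconf horient hspace hdF hdbarF
end

section
/- Let V ⊆ ℂ be open and let z, θ : V → ℂ be smooth functions which are harmonic (∂̄∂z ≡ 0 and ∂̄∂θ ≡ 0 on V), and which satisfy at every point of V: the conformality relation ∂z·conj(∂̄z) = ∂θ·conj(∂̄θ), the orientation condition |∂z| ≥ |∂̄z|, and the space-like condition |conj(α)·∂θ + α·∂̄θ| < |conj(α)·∂z + α·∂̄z| for every α ∈ ℂ with |α| = 1. Let f : V → ℂ be continuously differentiable. Then the 1-form f dz + conj(f) dθ is closed on V, i.e. ∂̄(f·∂z + conj(f)·∂θ) = ∂(f·∂̄z + conj(f)·∂̄θ) on V, if and only if the function ζ ↦ f(ζ)·∂z(ζ) + conj(f(ζ))·∂θ(ζ) is holomorphic on V. -/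
open Complex

private lemma wDBar_add {f g : ℂ → ℂ} {ζ : ℂ} (hf : DifferentiableAt ℝ f ζ)
    (hg : DifferentiableAt ℝ g ζ) :
    wirtingerDBar (fun w => f w + g w) ζ = wirtingerDBar f ζ + wirtingerDBar g ζ := by
  simp only [wirtingerDBar, fderiv_fun_add hf hg, ContinuousLinearMap.add_apply]
  ring

private lemma wD_add {f g : ℂ → ℂ} {ζ : ℂ} (hf : DifferentiableAt ℝ f ζ)
    (hg : DifferentiableAt ℝ g ζ) :
    wirtingerD (fun w => f w + g w) ζ = wirtingerD f ζ + wirtingerD g ζ := by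
  simp only [wirtingerD, fderiv_fun_add hf hg, ContinuousLinearMap.add_apply]
  ring

private lemma wDBar_mul {f g : ℂ → ℂ} {ζ : ℂ} (hf : DifferentiableAt ℝ f ζ)
    (hg : DifferentiableAt ℝ g ζ) :
    wirtingerDBar (fun w => f w * g w) ζ
      = wirtingerDBar f ζ * g ζ + f ζ * wirtingerDBar g ζ := by
  simp only [wirtingerDBar, fderiv_fun_mul hf hg, ContinuousLinearMap.add_apply,
    ContinuousLinearMap.smul_apply, smul_eq_mul]
  ring

private lemma wD_mul {f g : ℂ → ℂ} {ζ : ℂ} (hf : DifferentiableAt ℝ f ζ)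
    (hg : DifferentiableAt ℝ g ζ) :
    wirtingerD (fun w => f w * g w) ζ
      = wirtingerD f ζ * g ζ + f ζ * wirtingerD g ζ := by
  simp only [wirtingerD, fderiv_fun_mul hf hg, ContinuousLinearMap.add_apply,
    ContinuousLinearMap.smul_apply, smul_eq_mul]
  ring

private lemma fderiv_conj_apply {f : ℂ → ℂ} {ζ : ℂ} (hf : DifferentiableAt ℝ f ζ) (v : ℂ) :
    fderiv ℝ (fun w => (starRingEnd ℂ) (f w)) ζ v = (starRingEnd ℂ) (fderiv ℝ f ζ v) := by
  have h : HasFDerivAt (fun w => (starRingEnd ℂ) (f w))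
      ((Complex.conjCLE : ℂ →L[ℝ] ℂ).comp (fderiv ℝ f ζ)) ζ :=
    (Complex.conjCLE.hasFDerivAt).comp ζ hf.hasFDerivAt
  rw [h.fderiv]
  simp

private lemma diffAt_conj {f : ℂ → ℂ} {ζ : ℂ} (hf : DifferentiableAt ℝ f ζ) :
    DifferentiableAt ℝ (fun w => (starRingEnd ℂ) (f w)) ζ :=
  (Complex.conjCLE.differentiable.differentiableAt).comp ζ hf

private lemma wDBar_conj {f : ℂ → ℂ} {ζ : ℂ} (hf : DifferentiableAt ℝ f ζ) :
    wirtingerDBar (fun w => (starRingEnd ℂ) (f w)) ζ = (starRingEnd ℂ) (wirtingerD f ζ) := by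
  simp only [wirtingerDBar, wirtingerD, fderiv_conj_apply hf, map_mul, map_sub, map_add,
    map_one, map_div₀, map_ofNat, Complex.conj_I]
  ring

private lemma wD_conj {f : ℂ → ℂ} {ζ : ℂ} (hf : DifferentiableAt ℝ f ζ) :
    wirtingerD (fun w => (starRingEnd ℂ) (f w)) ζ = (starRingEnd ℂ) (wirtingerDBar f ζ) := by
  simp only [wirtingerDBar, wirtingerD, fderiv_conj_apply hf, map_mul, map_sub, map_add,
    map_one, map_div₀, map_ofNat, Complex.conj_I]
  ring

private lemma diffAt_fderiv_apply {F : ℂ → ℂ} {ζ : ℂ} (hF : ContDiffAt ℝ (⊤ : ℕ∞) F ζ) (v : ℂ) :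
    DifferentiableAt ℝ (fun w => fderiv ℝ F w v) ζ := by
  have hd : DifferentiableAt ℝ (fderiv ℝ F) ζ :=
    (hF.fderiv_right (m := 1) (by exact WithTop.coe_le_coe.mpr le_top)).differentiableAt one_ne_zero
  exact hd.clm_apply (differentiableAt_const v)

private lemma diffAt_wD {F : ℂ → ℂ} {ζ : ℂ} (hF : ContDiffAt ℝ (⊤ : ℕ∞) F ζ) :
    DifferentiableAt ℝ (fun w => wirtingerD F w) ζ := by
  unfold wirtingerD
  exact ((diffAt_fderiv_apply hF 1).sub
    ((differentiableAt_const Complex.I).mul (diffAt_fderiv_apply hF Complex.I))).const_mul _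

private lemma diffAt_wDBar {F : ℂ → ℂ} {ζ : ℂ} (hF : ContDiffAt ℝ (⊤ : ℕ∞) F ζ) :
    DifferentiableAt ℝ (fun w => wirtingerDBar F w) ζ := by
  unfold wirtingerDBar
  exact ((diffAt_fderiv_apply hF 1).add
    ((differentiableAt_const Complex.I).mul (diffAt_fderiv_apply hF Complex.I))).const_mul _

private lemma fderiv_fderiv_apply {F : ℂ → ℂ} {ζ : ℂ} (hF : ContDiffAt ℝ (⊤ : ℕ∞) F ζ) (u v : ℂ) :
    fderiv ℝ (fun w => fderiv ℝ F w v) ζ u = fderiv ℝ (fderiv ℝ F) ζ u v := by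
  have hd : DifferentiableAt ℝ (fderiv ℝ F) ζ :=
    (hF.fderiv_right (m := 1) (by exact WithTop.coe_le_coe.mpr le_top)).differentiableAt one_ne_zero
  rw [fderiv_clm_apply hd (differentiableAt_const v)]
  simp

/-- Equality of mixed Wirtinger derivatives, `∂(∂̄F) = ∂̄(∂F)`, for smooth `F`. -/
private lemma wD_wDBar_comm {F : ℂ → ℂ} {ζ : ℂ} (hF : ContDiffAt ℝ (⊤ : ℕ∞) F ζ) :
    wirtingerD (fun w => wirtingerDBar F w) ζ = wirtingerDBar (fun w => wirtingerD F w) ζ := by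
  have hsymm : fderiv ℝ (fderiv ℝ F) ζ 1 Complex.I = fderiv ℝ (fderiv ℝ F) ζ Complex.I 1 :=
    (hF.isSymmSndFDerivAt (by rw [minSmoothness_of_isRCLikeNormedField]; exact WithTop.coe_le_coe.mpr le_top)) 1 Complex.I
  have h1 : ∀ u : ℂ, fderiv ℝ (fun w => wirtingerDBar F w) ζ u
      = (1/2) * (fderiv ℝ (fderiv ℝ F) ζ u 1
        + Complex.I * fderiv ℝ (fderiv ℝ F) ζ u Complex.I) := by
    intro u
    have hrw : (fun w => wirtingerDBar F w)
        = fun w => (1/2 : ℂ) * (fderiv ℝ F w 1 + Complex.I * fderiv ℝ F w Complex.I) := rfl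
    rw [hrw, fderiv_const_mul (((diffAt_fderiv_apply hF 1).fun_add
      ((differentiableAt_const Complex.I).fun_mul (diffAt_fderiv_apply hF Complex.I)))),
      ContinuousLinearMap.smul_apply, fderiv_fun_add (diffAt_fderiv_apply hF 1)
        ((differentiableAt_const Complex.I).fun_mul (diffAt_fderiv_apply hF Complex.I)),
      ContinuousLinearMap.add_apply, fderiv_const_mul (diffAt_fderiv_apply hF Complex.I),
      ContinuousLinearMap.smul_apply, fderiv_fderiv_apply hF, fderiv_fderiv_apply hF]
    simp [smul_eq_mul]
  have h2 : ∀ u : ℂ, fderiv ℝ (fun w => wirtingerD F w) ζ u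
      = (1/2) * (fderiv ℝ (fderiv ℝ F) ζ u 1
        - Complex.I * fderiv ℝ (fderiv ℝ F) ζ u Complex.I) := by
    intro u
    have hrw : (fun w => wirtingerD F w)
        = fun w => (1/2 : ℂ) * (fderiv ℝ F w 1 - Complex.I * fderiv ℝ F w Complex.I) := rfl
    rw [hrw, fderiv_const_mul (((diffAt_fderiv_apply hF 1).fun_sub
      ((differentiableAt_const Complex.I).fun_mul (diffAt_fderiv_apply hF Complex.I)))),
      ContinuousLinearMap.smul_apply, fderiv_fun_sub (diffAt_fderiv_apply hF 1)
        ((differentiableAt_const Complex.I).fun_mul (diffAt_fderiv_apply hF Complex.I)),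
      ContinuousLinearMap.sub_apply, fderiv_const_mul (diffAt_fderiv_apply hF Complex.I),
      ContinuousLinearMap.smul_apply, fderiv_fderiv_apply hF, fderiv_fderiv_apply hF]
    simp [smul_eq_mul]
  rw [wirtingerD, wirtingerDBar, h1 1, h1 Complex.I, h2 1, h2 Complex.I, hsymm]
  ring

/-- The pointwise linear-algebra heart of the proposition. -/
private lemma key_alg {p q r s a b : ℂ} (hp : p ≠ 0)
    (habs : ‖p‖ * ‖q‖ = ‖r‖ * ‖s‖)
    (hlt : ‖r‖ ^ 2 + ‖s‖ ^ 2 < ‖p‖ ^ 2 + ‖q‖ ^ 2)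
    (hconf2 : (starRingEnd ℂ) p * q = (starRingEnd ℂ) r * s) :
    (b * p + (starRingEnd ℂ) a * r = a * q + (starRingEnd ℂ) b * s)
      ↔ b * p + (starRingEnd ℂ) a * r = 0 := by
  have hcp : (starRingEnd ℂ) p ≠ 0 := by
    simpa using hp
  have sub : ∀ b' : ℂ, b' * p + (starRingEnd ℂ) a * r = 0
      → a * q + (starRingEnd ℂ) b' * s = 0 := by
    intro b' h0'
    have h1 : (starRingEnd ℂ) b' * (starRingEnd ℂ) p + a * (starRingEnd ℂ) r = 0 := by
      have := congrArg (starRingEnd ℂ) h0'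
      simpa [map_add, map_mul] using this
    have h2 : (a * q + (starRingEnd ℂ) b' * s) * (starRingEnd ℂ) p = 0 := by
      linear_combination a * hconf2 + s * h1
    exact (mul_eq_zero.mp h2).resolve_right hcp
  constructor
  · intro h
    set b₀ : ℂ := -((starRingEnd ℂ) a * r) / p with hb₀
    have hb₀p : b₀ * p = -((starRingEnd ℂ) a * r) := by
      rw [hb₀, div_mul_cancel₀ _ hp]
    have h0 : b₀ * p + (starRingEnd ℂ) a * r = 0 := by rw [hb₀p]; ring
    have h1 : a * q + (starRingEnd ℂ) b₀ * s = 0 := sub b₀ h0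
    have hX : b * p + (starRingEnd ℂ) a * r = (b - b₀) * p := by
      linear_combination h0
    have hX2 : a * q + (starRingEnd ℂ) b * s = (starRingEnd ℂ) (b - b₀) * s := by
      simp only [map_sub]
      linear_combination h1
    have heq : (b - b₀) * p = (starRingEnd ℂ) (b - b₀) * s := by
      rw [← hX, h, hX2]
    by_cases hβ : b - b₀ = 0
    · rw [hX, hβ, zero_mul]
    · exfalso
      have habsβ : ‖b - b₀‖ * ‖p‖
          = ‖b - b₀‖ * ‖s‖ := by
        have := congrArg norm heq
        rwa [norm_mul, norm_mul, Complex.norm_conj] at this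
      have hβ' : ‖b - b₀‖ ≠ 0 := by
        simpa [sub_eq_zero] using hβ
      have hps : ‖p‖ = ‖s‖ := mul_left_cancel₀ hβ' habsβ
      have hp' : ‖p‖ ≠ 0 := by simpa using hp
      have hqr : ‖q‖ = ‖r‖ := by
        apply mul_left_cancel₀ hp'
        rw [habs, ← hps]
        ring
      rw [← hps, ← hqr] at hlt
      linarith
  · intro h0
    rw [h0]
    exact (sub b h0).symm

/-- For a smooth conformal harmonic orientation-preserving space-like parametrization
`(z, θ)` and a `C¹` function `f`, the 1-form `f dz + conj(f) dθ` is closed if and only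
if the function `f ∂z + conj(f) ∂θ` is holomorphic (`∂̄(f ∂z + conj(f) ∂θ) ≡ 0`). -/
theorem closed_form_iff_holomorphic (V : Set ℂ) (hV : IsOpen V) (z θ f : ℂ → ℂ)
    (hz : ContDiffOn ℝ (⊤ : ℕ∞) z V) (hθ : ContDiffOn ℝ (⊤ : ℕ∞) θ V)
    (hzharm : ∀ ζ ∈ V, wirtingerDBar (fun w => wirtingerD z w) ζ = 0)
    (hθharm : ∀ ζ ∈ V, wirtingerDBar (fun w => wirtingerD θ w) ζ = 0)
    (hconf : ∀ ζ ∈ V, wirtingerD z ζ * (starRingEnd ℂ) (wirtingerDBar z ζ)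
      = wirtingerD θ ζ * (starRingEnd ℂ) (wirtingerDBar θ ζ))
    (horient : ∀ ζ ∈ V, ‖wirtingerDBar z ζ‖ ≤ ‖wirtingerD z ζ‖)
    (hspace : ∀ ζ ∈ V, ∀ α : ℂ, ‖α‖ = 1 →
      ‖(starRingEnd ℂ) α * wirtingerD θ ζ + α * wirtingerDBar θ ζ‖ <
        ‖(starRingEnd ℂ) α * wirtingerD z ζ + α * wirtingerDBar z ζ‖)
    (hf : ContDiffOn ℝ 1 f V) :
    (∀ ζ ∈ V,
      wirtingerDBar (fun w => f w * wirtingerD z w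
        + (starRingEnd ℂ) (f w) * wirtingerD θ w) ζ
      = wirtingerD (fun w => f w * wirtingerDBar z w
        + (starRingEnd ℂ) (f w) * wirtingerDBar θ w) ζ)
    ↔ (∀ ζ ∈ V,
      wirtingerDBar (fun w => f w * wirtingerD z w
        + (starRingEnd ℂ) (f w) * wirtingerD θ w) ζ = 0) := by
  refine forall₂_congr fun ζ hζ => ?_
  -- notations
  have hmem : V ∈ nhds ζ := hV.mem_nhds hζ
  have hzc : ContDiffAt ℝ (⊤ : ℕ∞) z ζ := hz.contDiffAt hmem
  have hθc : ContDiffAt ℝ (⊤ : ℕ∞) θ ζ := hθ.contDiffAt hmem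
  have hfd : DifferentiableAt ℝ f ζ := ((hf.contDiffAt hmem).differentiableAt one_ne_zero)
  have hdP : DifferentiableAt ℝ (fun w => wirtingerD z w) ζ := diffAt_wD hzc
  have hdR : DifferentiableAt ℝ (fun w => wirtingerD θ w) ζ := diffAt_wD hθc
  have hdQ : DifferentiableAt ℝ (fun w => wirtingerDBar z w) ζ := diffAt_wDBar hzc
  have hdS : DifferentiableAt ℝ (fun w => wirtingerDBar θ w) ζ := diffAt_wDBar hθc
  have hdcf : DifferentiableAt ℝ (fun w => (starRingEnd ℂ) (f w)) ζ := diffAt_conj hfd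
  set p := wirtingerD z ζ
  set q := wirtingerDBar z ζ
  set r := wirtingerD θ ζ
  set s := wirtingerDBar θ ζ
  set a := wirtingerD f ζ
  set b := wirtingerDBar f ζ
  -- the left-hand side
  have hL : wirtingerDBar (fun w => f w * wirtingerD z w
      + (starRingEnd ℂ) (f w) * wirtingerD θ w) ζ = b * p + (starRingEnd ℂ) a * r := by
    rw [wDBar_add (hfd.fun_mul hdP) (hdcf.fun_mul hdR), wDBar_mul hfd hdP, wDBar_mul hdcf hdR,
      wDBar_conj hfd, hzharm ζ hζ, hθharm ζ hζ]
    ring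
  -- the right-hand side
  have hQ0 : wirtingerD (fun w => wirtingerDBar z w) ζ = 0 := by
    rw [wD_wDBar_comm hzc]; exact hzharm ζ hζ
  have hS0 : wirtingerD (fun w => wirtingerDBar θ w) ζ = 0 := by
    rw [wD_wDBar_comm hθc]; exact hθharm ζ hζ
  have hR : wirtingerD (fun w => f w * wirtingerDBar z w
      + (starRingEnd ℂ) (f w) * wirtingerDBar θ w) ζ = a * q + (starRingEnd ℂ) b * s := by
    rw [wD_add (hfd.fun_mul hdQ) (hdcf.fun_mul hdS), wD_mul hfd hdQ, wD_mul hdcf hdS,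
      wD_conj hfd, hQ0, hS0]
    ring
  rw [hL, hR]
  -- geometric facts
  have hpq : p * (starRingEnd ℂ) q = r * (starRingEnd ℂ) s := hconf ζ hζ
  have hp : p ≠ 0 := by
    intro hp0
    have h1 : ‖q‖ ≤ ‖p‖ := horient ζ hζ
    have hq0 : q = 0 := by
      have h1' : ‖q‖ ≤ 0 := by simpa [hp0] using h1
      simpa using norm_eq_zero.mp (le_antisymm h1' (norm_nonneg q))
    have h2 : ‖(starRingEnd ℂ) 1 * r + 1 * s‖
        < ‖(starRingEnd ℂ) 1 * p + 1 * q‖ := hspace ζ hζ 1 (by simp)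
    rw [hp0, hq0] at h2
    simp only [map_one, one_mul, mul_zero, add_zero, map_zero, norm_zero] at h2
    exact (norm_nonneg _).not_gt h2
  have habs : ‖p‖ * ‖q‖ = ‖r‖ * ‖s‖ := by
    have := congrArg norm hpq
    rwa [norm_mul, norm_mul, Complex.norm_conj, Complex.norm_conj] at this
  have hlt : ‖r‖ ^ 2 + ‖s‖ ^ 2
      < ‖p‖ ^ 2 + ‖q‖ ^ 2 := by
    have h1 : ‖r + s‖ < ‖p + q‖ := by
      have := hspace ζ hζ 1 (by simp)
      simpa using this
    have h2 : ‖r + s‖ ^ 2 < ‖p + q‖ ^ 2 :=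
      pow_lt_pow_left₀ h1 (norm_nonneg _) (by norm_num)
    have hre : (r * (starRingEnd ℂ) s).re = (p * (starRingEnd ℂ) q).re := by
      rw [hpq]
    rw [Complex.sq_norm, Complex.sq_norm, Complex.normSq_add, Complex.normSq_add] at h2
    simp only [Complex.sq_norm]
    linarith
  have hconf2 : (starRingEnd ℂ) p * q = (starRingEnd ℂ) r * s := by
    have := congrArg (starRingEnd ℂ) hpq
    simpa [map_mul, mul_comm] using this
  exact key_alg hp habs hlt hconf2
end

section
/- Let s, P, Q, f, g ∈ ℂ with s ≠ 0, and set A := s² and B := conj(P)·Q / conj(s)² (equivalently, B is determined by the conformality relation A·conj(B) = P·conj(Q)). Define ψ_𝔟 := s·f + (P/s)·conj(f) and ψ_𝔴 := s·g + (conj(Q)/s)·conj(g). Then for every u ∈ ℂ: Re[ f·g·(A·u + B·conj(u)) + conj(f)·g·(P·u + Q·conj(u)) ] = Re[ ψ_𝔟·ψ_𝔴·u ]. -/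
open Complex

/-- The coefficient identity underlying `Re[f_𝔟 f_𝔴 dz + conj(f_𝔟) f_𝔴 dθ] = Re[ψ_𝔟 ψ_𝔴 dζ]`:
with `A = s²`, `B = conj(P) Q / conj(s)²`, `ψ_𝔟 = s f + (P/s) conj(f)` and
`ψ_𝔴 = s g + (conj(Q)/s) conj(g)`, one has
`Re[f g (A u + B conj u) + conj(f) g (P u + Q conj u)] = Re[ψ_𝔟 ψ_𝔴 u]` for every `u`. -/
theorem psi_coefficient_identity (s P Q f g : ℂ) (hs : s ≠ 0)
    (A B : ℂ) (hA : A = s ^ 2)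
    (hB : B = (starRingEnd ℂ) P * Q / ((starRingEnd ℂ) s) ^ 2) :
    ∀ u : ℂ,
      (f * g * (A * u + B * (starRingEnd ℂ) u)
        + (starRingEnd ℂ) f * g * (P * u + Q * (starRingEnd ℂ) u)).re
      = ((s * f + (P / s) * (starRingEnd ℂ) f)
          * (s * g + ((starRingEnd ℂ) Q / s) * (starRingEnd ℂ) g) * u).re := by
  intro u
  subst hA hB
  have hs' : (starRingEnd ℂ) s ≠ 0 := by simpa
  set t₁ : ℂ := f * g * ((starRingEnd ℂ) P * Q / ((starRingEnd ℂ) s) ^ 2) * (starRingEnd ℂ) u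
  set t₂ : ℂ := (starRingEnd ℂ) f * g * Q * (starRingEnd ℂ) u
  have key : (f * g * (s ^ 2 * u + (starRingEnd ℂ) P * Q / ((starRingEnd ℂ) s) ^ 2 * (starRingEnd ℂ) u)
        + (starRingEnd ℂ) f * g * (P * u + Q * (starRingEnd ℂ) u))
      = ((s * f + (P / s) * (starRingEnd ℂ) f)
          * (s * g + ((starRingEnd ℂ) Q / s) * (starRingEnd ℂ) g) * u)
        + (t₁ - (starRingEnd ℂ) t₁) + (t₂ - (starRingEnd ℂ) t₂) := by
    simp only [t₁, t₂, map_mul, map_div₀, map_pow, Complex.conj_conj]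
    field_simp
    ring
  rw [key]
  simp [add_re, sub_re, conj_re]
end
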